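/- arXiv:2105.07697 — 2 statements merged into one kernel-verified Lean document; each statement's English description precedes it below -/
import Mathlib

section
/- Let V be a vector space over ℚ with a symmetric bilinear form b, and let L ⊆ V be a ℤ-submodule on which b is integral and even, i.e. b(x,y) ∈ ℤ and b(x,x) ∈ 2ℤ for all x, y ∈ L. Let h ∈ L and let B ∈ V with 2B ∈ L, and assume 4·b(B,h) + b(h,h) ∈ 4ℤ. Then for every a ∈ ℤ and every c ∈ L, setting B' = B + (a/2)·h + c, one has b(B',B') − b(B,B) ∈ ℤ. -/
/-- If `L` is a `ℤ`-submodule of a `ℚ`-vector space on which the symmetric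
bilinear form `b` is integral and even, `h ∈ L`, `2B ∈ L` and `4·b(B,h) + b(h,h) ∈ 4ℤ`,
then for `B' = B + (a/2)·h + c` (with `a ∈ ℤ`, `c ∈ L`) one has `b(B',B') − b(B,B) ∈ ℤ`. -/
theorem Bfield_square_invariant {V : Type*} [AddCommGroup V] [Module ℚ V]
    (b : V →ₗ[ℚ] V →ₗ[ℚ] ℚ) (hb : ∀ x y : V, b x y = b y x)
    (L : Submodule ℤ V)
    (hint : ∀ x ∈ L, ∀ y ∈ L, ∃ n : ℤ, b x y = n)
    (heven : ∀ x ∈ L, ∃ n : ℤ, b x x = 2 * n)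
    (h : V) (hh : h ∈ L) (B : V) (h2B : (2 : ℤ) • B ∈ L)
    (hcong : ∃ m : ℤ, 4 * b B h + b h h = 4 * m) :
    ∀ a : ℤ, ∀ c ∈ L, ∃ n : ℤ,
      b (B + ((a : ℚ) / 2) • h + c) (B + ((a : ℚ) / 2) • h + c) - b B B = n := by
  intro a c hc
  obtain ⟨m, hm⟩ := hcong
  obtain ⟨k, hk⟩ := heven h hh
  obtain ⟨p, hp⟩ := hint _ h2B _ hc
  obtain ⟨q, hq⟩ := hint h hh c hc
  obtain ⟨r, hr⟩ := hint c hc c hc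
  obtain ⟨e, he⟩ := Int.even_mul_succ_self (a - 1)
  have hp' : 2 * b B c = (p : ℚ) := by
    have : b ((2:ℤ) • B) c = (p : ℚ) := hp
    simpa [map_zsmul, two_mul] using this
  refine ⟨a * m + e * k + p + a * q + r, ?_⟩
  have hbc := hb c B
  have hbh := hb h B
  have hch := hb c h
  have he' : ((a:ℚ) - 1) * ((a:ℚ) - 1 + 1) = e + e := by exact_mod_cast congrArg (Int.cast : ℤ → ℚ) he
  simp only [map_add, LinearMap.add_apply, map_smul, LinearMap.smul_apply, smul_eq_mul]
  push_cast
  linear_combination ((a:ℚ)/4) * hm + (((a:ℚ)^2 - a)/4) * hk + ((k:ℚ)/2) * he' + hp' + (a:ℚ) * hq + hr + ((a:ℚ)/2) * hbh + hbc + ((a:ℚ)/2) * hch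
end

section
/- For every integer m ≥ 1 there exists a 3×3 integer matrix S with det S = 1 or det S = −1 such that S · M · Sᵀ = N, where M = [[0,0,2],[0,−4m,1],[2,1,−2]] and N = [[0,1,0],[1,0,0],[0,0,−16m]]. Equivalently, the even lattice (ℤ³, M) is isometric to U ⊕ ⟨−16m⟩, where U is the rank-two hyperbolic lattice with Gram matrix [[0,1],[1,0]]. -/
/-- For every `m ≥ 1` the even lattice with Gram matrix
`[[0,0,2],[0,−4m,1],[2,1,−2]]` is isometric to `U ⊕ ⟨−16m⟩`: there is a unimodular
integer matrix `S` with `S·M·Sᵀ = [[0,1,0],[1,0,0],[0,0,−16m]]`. -/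
theorem lattice_isometric_U_oplus (m : ℤ) (hm : 1 ≤ m) :
    ∃ S : Matrix (Fin 3) (Fin 3) ℤ, (S.det = 1 ∨ S.det = -1) ∧
      S * !![0, 0, 2; 0, -4 * m, 1; 2, 1, -2] * S.transpose
        = !![0, 1, 0; 1, 0, 0; 0, 0, -16 * m] := by
  refine ⟨!![m, 1, 1; 2*m^2 - 2*m + 1, 2*m - 1, 2*m; -8*m^2 + 4*m - 1, 2 - 8*m, -8*m],
    Or.inl ?_, ?_⟩
  · rw [Matrix.det_fin_three]
    norm_num [Matrix.vecHead, Matrix.vecTail, Matrix.cons_val_two]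
    ring
  · ext i j
    fin_cases i <;> fin_cases j <;>
      simp [Matrix.mul_apply, Fin.sum_univ_succ, Matrix.vecHead, Matrix.vecTail] <;> ring
end
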